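/- Let E be an exact category with enough projectives, P a projective cover of E having weak exponentials, and X an object of P. The following are equivalent: (1) X is internally projective; (2) for every object B of E and every P-cover Y ↠ B, every weak exponential W of X and Y in P is a quasi exponential of X and B (via the arrow W × X → B induced on the quotient by the weak evaluation V → Y composed with Y ↠ B); (3) for every object B of E there exist a P-cover Y ↠ B and a weak exponential W of X and Y in P such that W is a quasi exponential of X and B. -/

import Mathlib

open CategoryTheory Limits

namespace ExComp

universe v u

variable {E : Type u} [Category.{v} E]

/-- A regular epimorphism, as a property of a morphism. -/
def RegEpi {A B : E} (f : A ⟶ B) : Prop := Nonempty (RegularEpi f)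

/-- An object is (regular) projective if its covariant hom functor sends regular
epimorphisms to surjections. -/
def RegProjective (X : E) : Prop :=
  ∀ ⦃A B : E⦄ (e : A ⟶ B), RegEpi e → ∀ f : X ⟶ B, ∃ g : X ⟶ A, g ≫ e = f

/-- `E` has enough projectives: every object admits a regular epimorphism from a
projective object. -/
def EnoughRegProjectives (E : Type u) [Category.{v} E] : Prop :=
  ∀ A : E, ∃ (X : E) (p : X ⟶ A), RegProjective X ∧ RegEpi p

/-- An internal equivalence relation: a jointly monic, reflexive, symmetric and
transitive pair of parallel arrows. -/
structure IsEquivRelPair {R X : E} (r₁ r₂ : R ⟶ X) : Prop where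
  jointlyMono : ∀ ⦃T : E⦄ (h k : T ⟶ R), h ≫ r₁ = k ≫ r₁ → h ≫ r₂ = k ≫ r₂ → h = k
  refl : ∃ d : X ⟶ R, d ≫ r₁ = 𝟙 X ∧ d ≫ r₂ = 𝟙 X
  symm : ∃ s : R ⟶ R, s ≫ r₁ = r₂ ∧ s ≫ r₂ = r₁
  trans : ∀ ⦃T : E⦄ (p q : T ⟶ R), p ≫ r₂ = q ≫ r₁ →
    ∃ t : T ⟶ R, t ≫ r₁ = p ≫ r₁ ∧ t ≫ r₂ = q ≫ r₂

/-- An exact category: a finitely complete category where every morphism factors as a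
regular epi followed by a mono, regular epis are stable under pullback, and every
internal equivalence relation is effective (it is the kernel pair of the coequaliser
it admits). -/
structure IsExact (E : Type u) [Category.{v} E] [HasFiniteLimits E] : Prop where
  factor : ∀ ⦃A B : E⦄ (f : A ⟶ B), ∃ (I : E) (e : A ⟶ I) (m : I ⟶ B),
    RegEpi e ∧ Mono m ∧ e ≫ m = f
  stable : ∀ ⦃A B C : E⦄ (f : A ⟶ B) (g : C ⟶ B), RegEpi f → RegEpi (pullback.snd f g)
  effective : ∀ ⦃R X : E⦄ (r₁ r₂ : R ⟶ X), IsEquivRelPair r₁ r₂ →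
    ∃ (Q : E) (q : X ⟶ Q) (w : r₁ ≫ q = r₂ ≫ q),
      Nonempty (IsColimit (Cofork.ofπ q w)) ∧ IsPullback r₁ r₂ q q

/-- A projective cover of `E`: a (full sub)collection of objects, each projective,
such that every object of `E` admits a regular epimorphism from one of them. -/
def IsProjectiveCover (P : Set E) : Prop :=
  (∀ X ∈ P, RegProjective X) ∧ ∀ A : E, ∃ X ∈ P, ∃ p : X ⟶ A, RegEpi p

section FinLim
variable [HasFiniteLimits E]

/-- `X` is internally projective: every arrow `T ⨯ X ⟶ B` lifts along a regular epi
`A ↠ B` after passing to a regular epi `U ↠ T`. -/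
def InternallyProjective (X : E) : Prop :=
  ∀ ⦃T A B : E⦄ (e : A ⟶ B), RegEpi e → ∀ f : T ⨯ X ⟶ B,
    ∃ (U : E) (u : U ⟶ T) (g : U ⨯ X ⟶ A), RegEpi u ∧ g ≫ e = prod.map u (𝟙 X) ≫ f

/-- Cartesian closure, as a property: for every object `X` the functor `(−) ⨯ X` has a
right adjoint. -/
def CartesianClosedP (E : Type u) [Category.{v} E] [HasFiniteLimits E] : Prop :=
  ∀ X : E, (prod.functor.flip.obj X).IsLeftAdjoint

/-- Local cartesian closure, as a property: every slice is cartesian closed. -/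
def LocallyCartesianClosedP (E : Type u) [Category.{v} E] [HasFiniteLimits E] : Prop :=
  ∀ (I : E) (F : Over I), ((prod.functor (C := Over I)).flip.obj F).IsLeftAdjoint

end FinLim

/-! ## Weak products and weak simple products -/

/-- A weak product in `P` of `X` and `Y`: a span through which every span in `P`
factors (not necessarily uniquely). -/
structure IsWeakProduct (P : Set E) {X Y V : E} (p : V ⟶ X) (q : V ⟶ Y) : Prop where
  mem : V ∈ P
  lift : ∀ ⦃V' : E⦄, V' ∈ P → ∀ (p' : V' ⟶ X) (q' : V' ⟶ Y),
    ∃ h : V' ⟶ V, h ≫ p = p' ∧ h ≫ q = q'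

/-- An arrow out of a weak product is determined by projections if it coequalises
every pair of arrows (from an object of `P`) coequalised by both projections. -/
def DeterminedByProjections (P : Set E) {V X Y Z : E} (p : V ⟶ X) (q : V ⟶ Y)
    (f : V ⟶ Z) : Prop :=
  ∀ ⦃V' : E⦄, V' ∈ P → ∀ (h k : V' ⟶ V), h ≫ p = k ≫ p → h ≫ q = k ≫ q → h ≫ f = k ≫ f

/-- A candidate diagram for a weak simple product of a span `J ←f Y →g X`. -/
structure WSPCone (P : Set E) {J Y X : E} (f : Y ⟶ J) (g : Y ⟶ X)
    (W V : E) (w : W ⟶ J) (p : V ⟶ W) (q : V ⟶ X) (e : V ⟶ Y) : Prop where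
  memW : W ∈ P
  wp : IsWeakProduct P p q
  det : DeterminedByProjections P p q e
  comm₁ : p ≫ w = e ≫ f
  comm₂ : q = e ≫ g

/-- A weak simple product: a weakly terminal candidate diagram. -/
structure IsWeakSimpleProduct (P : Set E) {J Y X : E} (f : Y ⟶ J) (g : Y ⟶ X)
    (W V : E) (w : W ⟶ J) (p : V ⟶ W) (q : V ⟶ X) (e : V ⟶ Y) : Prop where
  cone : WSPCone P f g W V w p q e
  lift : ∀ ⦃W' V' : E⦄ (w' : W' ⟶ J) (p' : V' ⟶ W') (q' : V' ⟶ X) (e' : V' ⟶ Y),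
    WSPCone P f g W' V' w' p' q' e' →
    ∃ (α : W' ⟶ W) (β : V' ⟶ V),
      α ≫ w = w' ∧ β ≫ p = p' ≫ α ∧ β ≫ q = q' ∧ β ≫ e = e'

/-- `P` has weak simple products. -/
def HasWeakSimpleProducts (P : Set E) : Prop :=
  ∀ ⦃J Y X : E⦄, J ∈ P → Y ∈ P → X ∈ P → ∀ (f : Y ⟶ J) (g : Y ⟶ X),
    ∃ (W V : E) (w : W ⟶ J) (p : V ⟶ W) (q : V ⟶ X) (e : V ⟶ Y),
      IsWeakSimpleProduct P f g W V w p q e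

/-! ## Pseudo simple products -/

/-- A candidate diagram for a pseudo simple product (no determinacy requirement). -/
structure PSPCone (P : Set E) {J Y X : E} (f : Y ⟶ J) (g : Y ⟶ X)
    (W V : E) (w : W ⟶ J) (p : V ⟶ W) (q : V ⟶ X) (e : V ⟶ Y) : Prop where
  memW : W ∈ P
  wp : IsWeakProduct P p q
  comm₁ : p ≫ w = e ≫ f
  comm₂ : q = e ≫ g

/-- A pseudo simple product: a weakly terminal candidate diagram. -/
structure IsPseudoSimpleProduct (P : Set E) {J Y X : E} (f : Y ⟶ J) (g : Y ⟶ X)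
    (W V : E) (w : W ⟶ J) (p : V ⟶ W) (q : V ⟶ X) (e : V ⟶ Y) : Prop where
  cone : PSPCone P f g W V w p q e
  lift : ∀ ⦃W' V' : E⦄ (w' : W' ⟶ J) (p' : V' ⟶ W') (q' : V' ⟶ X) (e' : V' ⟶ Y),
    PSPCone P f g W' V' w' p' q' e' →
    ∃ (α : W' ⟶ W) (β : V' ⟶ V),
      α ≫ w = w' ∧ β ≫ p = p' ≫ α ∧ β ≫ q = q' ∧ β ≫ e = e'

/-- `P` has pseudo simple products. -/
def HasPseudoSimpleProducts (P : Set E) : Prop :=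
  ∀ ⦃J Y X : E⦄, J ∈ P → Y ∈ P → X ∈ P → ∀ (f : Y ⟶ J) (g : Y ⟶ X),
    ∃ (W V : E) (w : W ⟶ J) (p : V ⟶ W) (q : V ⟶ X) (e : V ⟶ Y),
      IsPseudoSimpleProduct P f g W V w p q e

/-! ## Weak exponentials -/

/-- A candidate diagram for a weak exponential of `X` and `Y`. -/
structure WExpCone (P : Set E) {X Y : E} (W V : E) (p : V ⟶ W) (q : V ⟶ X)
    (e : V ⟶ Y) : Prop where
  memW : W ∈ P
  wp : IsWeakProduct P p q
  det : DeterminedByProjections P p q e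

/-- A weak exponential of `X` and `Y` in `P`. -/
structure IsWeakExponential (P : Set E) {X Y : E} (W V : E) (p : V ⟶ W) (q : V ⟶ X)
    (e : V ⟶ Y) : Prop where
  cone : WExpCone P W V p q e
  lift : ∀ ⦃W' V' : E⦄ (p' : V' ⟶ W') (q' : V' ⟶ X) (e' : V' ⟶ Y),
    WExpCone P W' V' p' q' e' →
    ∃ (α : W' ⟶ W) (β : V' ⟶ V), β ≫ p = p' ≫ α ∧ β ≫ q = q' ∧ β ≫ e = e'

/-- `P` has weak exponentials. -/
def HasWeakExponentials (P : Set E) : Prop :=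
  ∀ ⦃X Y : E⦄, X ∈ P → Y ∈ P →
    ∃ (W V : E) (p : V ⟶ W) (q : V ⟶ X) (e : V ⟶ Y), IsWeakExponential P W V p q e

/-- A quasi exponential of `X` and `B`: the weak universal property of an exponential
restricted to projective sources. -/
def IsQuasiExponential [HasFiniteLimits E] (P : Set E) (X : E) {B : E} (W : E)
    (e : W ⨯ X ⟶ B) : Prop :=
  ∀ ⦃Z : E⦄, Z ∈ P → ∀ f : Z ⨯ X ⟶ B, ∃ g : Z ⟶ W, prod.map g (𝟙 X) ≫ e = f

section FinLim2
variable [HasFiniteLimits E]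

/-! ## Pseudo equivalence relations, equalities and generalised weak (simple) products -/

/-- A pseudo equivalence relation: a pair of parallel arrows whose image in `E` is an
equivalence relation. -/
def IsPseudoEquivRel {Y1 Y0 : E} (y₁ y₂ : Y1 ⟶ Y0) : Prop :=
  ∃ (R : E) (e : Y1 ⟶ R) (m : R ⟶ Y0 ⨯ Y0), RegEpi e ∧ Mono m ∧
    e ≫ m = prod.lift y₁ y₂ ∧ IsEquivRelPair (m ≫ prod.fst) (m ≫ prod.snd)

/-- An equality for a weak limit, relative to the comparison arrow `c : V0 ⟶ L` into
the actual limit: a pseudo equivalence relation `v₁, v₂ : V1 ⇉ V0` in `P` such that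
`c` is a coequaliser of `v₁, v₂` and `V1` regularly covers the kernel pair of `c`. -/
structure IsEqualityFor (P : Set E) {V1 V0 L : E} (c : V0 ⟶ L) (v₁ v₂ : V1 ⟶ V0) :
    Prop where
  mem : V1 ∈ P
  per : IsPseudoEquivRel v₁ v₂
  w : v₁ ≫ c = v₂ ≫ c
  coeq : Nonempty (IsColimit (Cofork.ofπ c w))
  cover : RegEpi (pullback.lift v₁ v₂ w)

/-- An arrow `e : V ⟶ Z0` out of a weak product with projections `p, q` preserves
projections with respect to a pseudo equivalence relation `z₁, z₂ : Z1 ⇉ Z0` if for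
any equality `v₁, v₂ : V1 ⇉ V` for the weak product there is `t : V1 ⟶ Z1` with
`t ≫ zᵢ = vᵢ ≫ e`. -/
def PreservesProjWP (P : Set E) {V X Y Z1 Z0 : E} (p : V ⟶ X) (q : V ⟶ Y)
    (z₁ z₂ : Z1 ⟶ Z0) (e : V ⟶ Z0) : Prop :=
  ∀ ⦃V1 : E⦄ (v₁ v₂ : V1 ⟶ V), IsEqualityFor P (prod.lift p q) v₁ v₂ →
    ∃ t : V1 ⟶ Z1, t ≫ z₁ = v₁ ≫ e ∧ t ≫ z₂ = v₂ ≫ e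

/-- A candidate diagram for a generalised weak simple product of `f` and `g` with
respect to the pseudo equivalence relation `y₁, y₂`. -/
structure GWSPCone (P : Set E) {Y1 Y0 J X : E} (y₁ y₂ : Y1 ⟶ Y0) (f : Y0 ⟶ J)
    (g : Y0 ⟶ X) (W V : E) (w : W ⟶ J) (p : V ⟶ W) (q : V ⟶ X) (e : V ⟶ Y0) :
    Prop where
  memW : W ∈ P
  wp : IsWeakProduct P p q
  pres : PreservesProjWP P p q y₁ y₂ e
  comm₁ : p ≫ w = e ≫ f
  comm₂ : q = e ≫ g

/-- A generalised weak simple product: a weakly terminal candidate diagram. -/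
structure IsGWSP (P : Set E) {Y1 Y0 J X : E} (y₁ y₂ : Y1 ⟶ Y0) (f : Y0 ⟶ J)
    (g : Y0 ⟶ X) (W V : E) (w : W ⟶ J) (p : V ⟶ W) (q : V ⟶ X) (e : V ⟶ Y0) :
    Prop where
  cone : GWSPCone P y₁ y₂ f g W V w p q e
  lift : ∀ ⦃W' V' : E⦄ (w' : W' ⟶ J) (p' : V' ⟶ W') (q' : V' ⟶ X) (e' : V' ⟶ Y0),
    GWSPCone P y₁ y₂ f g W' V' w' p' q' e' →
    ∃ (α : W' ⟶ W) (β : V' ⟶ V),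
      α ≫ w = w' ∧ β ≫ p = p' ≫ α ∧ β ≫ q = q' ∧ β ≫ e = e'

/-- `P` has generalised weak simple products. -/
def HasGWSP (P : Set E) : Prop :=
  ∀ ⦃Y1 Y0 J X : E⦄, Y1 ∈ P → Y0 ∈ P → J ∈ P → X ∈ P →
    ∀ (y₁ y₂ : Y1 ⟶ Y0), IsPseudoEquivRel y₁ y₂ →
    ∀ (f : Y0 ⟶ J) (g : Y0 ⟶ X), y₁ ≫ f = y₂ ≫ f → y₁ ≫ g = y₂ ≫ g →
    ∃ (W V : E) (w : W ⟶ J) (p : V ⟶ W) (q : V ⟶ X) (e : V ⟶ Y0),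
      IsGWSP P y₁ y₂ f g W V w p q e

/-- A candidate diagram for a generalised weak exponential of `X` and `y₁, y₂`. -/
structure GWExpCone (P : Set E) {X Y1 Y0 : E} (y₁ y₂ : Y1 ⟶ Y0)
    (W V : E) (p : V ⟶ W) (q : V ⟶ X) (e : V ⟶ Y0) : Prop where
  memW : W ∈ P
  wp : IsWeakProduct P p q
  pres : PreservesProjWP P p q y₁ y₂ e

/-- A generalised weak exponential of `X` and a pseudo equivalence relation. -/
structure IsGWExp (P : Set E) {X Y1 Y0 : E} (y₁ y₂ : Y1 ⟶ Y0)
    (W V : E) (p : V ⟶ W) (q : V ⟶ X) (e : V ⟶ Y0) : Prop where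
  cone : GWExpCone P y₁ y₂ W V p q e
  lift : ∀ ⦃W' V' : E⦄ (p' : V' ⟶ W') (q' : V' ⟶ X) (e' : V' ⟶ Y0),
    GWExpCone P y₁ y₂ W' V' p' q' e' →
    ∃ (α : W' ⟶ W) (β : V' ⟶ V), β ≫ p = p' ≫ α ∧ β ≫ q = q' ∧ β ≫ e = e'

/-! ## Weak pullbacks and generalised weak dependent products -/

/-- A weak pullback in `P` of the cospan `X →f J ←w W`. -/
structure IsWeakPullback (P : Set E) {X J W V : E} (f : X ⟶ J) (w : W ⟶ J)
    (a : V ⟶ X) (b : V ⟶ W) : Prop where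
  mem : V ∈ P
  comm : a ≫ f = b ≫ w
  lift : ∀ ⦃V' : E⦄, V' ∈ P → ∀ (a' : V' ⟶ X) (b' : V' ⟶ W), a' ≫ f = b' ≫ w →
    ∃ h : V' ⟶ V, h ≫ a = a' ∧ h ≫ b = b'

/-- Preservation of projections for an arrow out of a weak pullback. -/
def PreservesProjWPB (P : Set E) {V X J W Z1 Z0 : E} (f : X ⟶ J) (w : W ⟶ J)
    (a : V ⟶ X) (b : V ⟶ W) (h : a ≫ f = b ≫ w) (z₁ z₂ : Z1 ⟶ Z0) (e : V ⟶ Z0) :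
    Prop :=
  ∀ ⦃V1 : E⦄ (v₁ v₂ : V1 ⟶ V), IsEqualityFor P (pullback.lift a b h) v₁ v₂ →
    ∃ t : V1 ⟶ Z1, t ≫ z₁ = v₁ ≫ e ∧ t ≫ z₂ = v₂ ≫ e

/-- A candidate diagram for a generalised weak dependent product of `g : Y0 ⟶ X`
along `f : X ⟶ J` with respect to `y₁, y₂`. -/
structure GWDPCone (P : Set E) {Y1 Y0 X J : E} (y₁ y₂ : Y1 ⟶ Y0) (g : Y0 ⟶ X)
    (f : X ⟶ J) (W V : E) (w : W ⟶ J) (a : V ⟶ X) (b : V ⟶ W) (e : V ⟶ Y0) :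
    Prop where
  memW : W ∈ P
  comm : a ≫ f = b ≫ w
  wpb : IsWeakPullback P f w a b
  overX : e ≫ g = a
  pres : PreservesProjWPB P f w a b comm y₁ y₂ e

/-- A generalised weak dependent product: a weakly terminal candidate diagram. -/
structure IsGWDP (P : Set E) {Y1 Y0 X J : E} (y₁ y₂ : Y1 ⟶ Y0) (g : Y0 ⟶ X)
    (f : X ⟶ J) (W V : E) (w : W ⟶ J) (a : V ⟶ X) (b : V ⟶ W) (e : V ⟶ Y0) :
    Prop where
  cone : GWDPCone P y₁ y₂ g f W V w a b e
  lift : ∀ ⦃W' V' : E⦄ (w' : W' ⟶ J) (a' : V' ⟶ X) (b' : V' ⟶ W') (e' : V' ⟶ Y0),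
    GWDPCone P y₁ y₂ g f W' V' w' a' b' e' →
    ∃ (α : W' ⟶ W) (β : V' ⟶ V),
      α ≫ w = w' ∧ β ≫ a = a' ∧ β ≫ b = b' ≫ α ∧ β ≫ e = e'

/-- `P` has generalised weak dependent products (i.e. `P` is weakly locally cartesian
closed). -/
def HasGWDP (P : Set E) : Prop :=
  ∀ ⦃Y1 Y0 X J : E⦄, Y1 ∈ P → Y0 ∈ P → X ∈ P → J ∈ P →
    ∀ (y₁ y₂ : Y1 ⟶ Y0), IsPseudoEquivRel y₁ y₂ →
    ∀ (g : Y0 ⟶ X) (f : X ⟶ J), y₁ ≫ g = y₂ ≫ g →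
    ∃ (W V : E) (w : W ⟶ J) (a : V ⟶ X) (b : V ⟶ W) (e : V ⟶ Y0),
      IsGWDP P y₁ y₂ g f W V w a b e

/-! ## The functor `w_X` on subobjects induced by weak simple products -/

/-- The adjunction property of the weak-simple-product operation `w_X` on subobjects:
for every subobject `a : A ↪ J ⨯ X`, every `P`-cover `Y ↠ A`, every weak simple
product `W → J` of the induced span and every image factorisation `W ↠ I ↪ J` of it,
the subobject `I ↪ J` is a value at `a` of a right adjoint to
`(−) ⨯ X : Sub(J) → Sub(J ⨯ X)`. -/
def WAdj (P : Set E) (J X : E) : Prop :=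
  ∀ ⦃A : E⦄ (a : A ⟶ J ⨯ X), Mono a →
  ∀ ⦃Y : E⦄, Y ∈ P → ∀ (c : Y ⟶ A), RegEpi c →
  ∀ ⦃W V : E⦄ (w : W ⟶ J) (p : V ⟶ W) (q : V ⟶ X) (e : V ⟶ Y),
    IsWeakSimpleProduct P (c ≫ a ≫ prod.fst) (c ≫ a ≫ prod.snd) W V w p q e →
  ∀ ⦃I : E⦄ (ew : W ⟶ I) (m : I ⟶ J), RegEpi ew → Mono m → ew ≫ m = w →
  ∀ ⦃B : E⦄ (b : B ⟶ J), Mono b →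
    ((∃ t : B ⨯ X ⟶ A, t ≫ a = prod.map b (𝟙 X)) ↔ ∃ s : B ⟶ I, s ≫ m = b)

/-! ## Weak dependent products (à la Carboni–Rosolini) -/

/-- `P` has weak dependent products: for `f : X ⟶ J` and `g : Y ⟶ X` in `P` there are
`w : W ⟶ J` in `P` and a surjection `Hom_{P/J}(h, w) → Hom_{P/X}(f*(h), g)` natural
in `h ∈ P/J`. -/
def HasWeakDependentProducts (P : Set E) : Prop :=
  ∀ ⦃X J Y : E⦄, X ∈ P → J ∈ P → Y ∈ P → ∀ (f : X ⟶ J) (g : Y ⟶ X),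
    ∃ (W : E) (_ : W ∈ P) (w : W ⟶ J)
      (ε : ∀ ⦃T : E⦄, T ∈ P → ∀ (h : T ⟶ J) (k : T ⟶ W), k ≫ w = h →
        (pullback h f ⟶ Y)),
      (∀ ⦃T : E⦄ (hT : T ∈ P) (h : T ⟶ J) (k : T ⟶ W) (hk : k ≫ w = h),
         ε hT h k hk ≫ g = pullback.snd h f) ∧
      (∀ ⦃T : E⦄ (hT : T ∈ P) (h : T ⟶ J) (d : pullback h f ⟶ Y),
         d ≫ g = pullback.snd h f → ∃ (k : T ⟶ W) (hk : k ≫ w = h), ε hT h k hk = d) ∧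
      (∀ ⦃T' T : E⦄ (hT' : T' ∈ P) (hT : T ∈ P) (u : T' ⟶ T) (h : T ⟶ J) (k : T ⟶ W)
         (hk : k ≫ w = h),
         ε hT' (u ≫ h) (u ≫ k) (by rw [Category.assoc, hk]) =
           pullback.map (u ≫ h) f h f u (𝟙 X) (𝟙 J) (by simp) (by simp) ≫ ε hT h k hk)

end FinLim2

/-! A weak exponential `W` of `X` and a projective `Y` is already a quasi exponential of `X` and
`Y`: an arrow `Z ⨯ X ⟶ Y` with `Z ∈ P` becomes a weak-exponential cone once `Z ⨯ X` is covered
by an object of `P`, and the comparison arrow into `W` works after cancelling that cover.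
Composing its evaluation with a cover `c : Y ↠ B` keeps this property as soon as every arrow
`Z ⨯ X ⟶ B` lifts through `c` after restricting along a regular epi onto `Z` (which splits, `Z`
being projective); this is internal projectivity of `X`. Conversely, a quasi exponential of `X`
and `B` whose evaluation factors through a projective `Y` yields the lifts that internal
projectivity asks for, since `Y ⟶ B` lifts along every regular epi onto `B`. -/

lemma RegEpi.epi {A B : E} {f : A ⟶ B} (h : RegEpi f) : Epi f :=
  h.elim (RegularEpi.epi f)

section WeakExponentials

variable [HasFiniteLimits E] {P : Set E}

lemma IsWeakProduct.of_regEpi (hP : IsProjectiveCover P) {S Z X : E} (hS : S ∈ P)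
    {s : S ⟶ Z ⨯ X} (hs : RegEpi s) : IsWeakProduct P (s ≫ prod.fst) (s ≫ prod.snd) where
  mem := hS
  lift _ hV' a b := by
    obtain ⟨h, hh⟩ := hP.1 _ hV' s hs (prod.lift a b)
    exact ⟨h, by rw [reassoc_of% hh, prod.lift_fst], by rw [reassoc_of% hh, prod.lift_snd]⟩

lemma IsWeakProduct.exists_comp_lift_eq (hP : IsProjectiveCover P) {W X V : E}
    {p : V ⟶ W} {q : V ⟶ X} (wp : IsWeakProduct P p q) :
    ∃ (S : E) (s : S ⟶ W ⨯ X) (h : S ⟶ V), RegEpi s ∧ h ≫ prod.lift p q = s := by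
  obtain ⟨S, hS, s, hs⟩ := hP.2 (W ⨯ X)
  obtain ⟨h, hp, hq⟩ := wp.lift hS (s ≫ prod.fst) (s ≫ prod.snd)
  exact ⟨S, s, h, hs, by ext <;> simp only [Category.assoc, prod.lift_fst, prod.lift_snd, hp, hq]⟩

lemma IsWeakProduct.epi_lift (hP : IsProjectiveCover P) {W X V : E} {p : V ⟶ W} {q : V ⟶ X}
    (wp : IsWeakProduct P p q) : Epi (prod.lift p q) := by
  obtain ⟨S, s, h, hs, hhs⟩ := wp.exists_comp_lift_eq hP
  have := hs.epi
  exact epi_of_epi_fac hhs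

lemma DeterminedByProjections.comp_eq (hP : IsProjectiveCover P) {V W X Y T : E}
    {p : V ⟶ W} {q : V ⟶ X} {v : V ⟶ Y} (det : DeterminedByProjections P p q v)
    {h k : T ⟶ V} (hhk : h ≫ prod.lift p q = k ≫ prod.lift p q) : h ≫ v = k ≫ v := by
  obtain ⟨T', hT', t, ht⟩ := hP.2 T
  have := ht.epi
  have hp : h ≫ p = k ≫ p := by simpa only [Category.assoc, prod.lift_fst] using hhk =≫ prod.fst
  have hq : h ≫ q = k ≫ q := by simpa only [Category.assoc, prod.lift_snd] using hhk =≫ prod.snd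
  rw [← cancel_epi t]
  simpa only [Category.assoc] using
    det hT' (t ≫ h) (t ≫ k) (by simp only [Category.assoc, hp]) (by simp only [Category.assoc, hq])

/-- `v` descends along the cover `s = h ≫ ⟨p, q⟩` of `W ⨯ X`, because `h ≫ v` coequalises the
kernel pair of `s`; the descended arrow restricts back to `v` on `V` by determinacy once more. -/
lemma DeterminedByProjections.exists_lift_comp_eq (hP : IsProjectiveCover P) {V W X Y : E}
    {p : V ⟶ W} {q : V ⟶ X} {v : V ⟶ Y} (wp : IsWeakProduct P p q)
    (det : DeterminedByProjections P p q v) : ∃ ev : W ⨯ X ⟶ Y, prod.lift p q ≫ ev = v := by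
  obtain ⟨S, s, h, hs, hhs⟩ := wp.exists_comp_lift_eq hP
  let i := hs.some
  have hcoeq : i.left ≫ h ≫ v = i.right ≫ h ≫ v := by
    simpa only [Category.assoc] using
      det.comp_eq hP (h := i.left ≫ h) (k := i.right ≫ h) (by simp only [Category.assoc, hhs, i.w])
  let ev := Cofork.IsColimit.desc i.isColimit (h ≫ v) hcoeq
  have hev : s ≫ ev = h ≫ v := Cofork.IsColimit.π_desc' i.isColimit (h ≫ v) hcoeq
  refine ⟨ev, ?_⟩
  obtain ⟨T, hT, t, ht⟩ := hP.2 V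
  have := ht.epi
  obtain ⟨m, hm⟩ := hP.1 T hT s hs (t ≫ prod.lift p q)
  have hmt : (m ≫ h) ≫ v = t ≫ v := det.comp_eq hP (by rw [Category.assoc, hhs, hm])
  rw [← cancel_epi t, ← reassoc_of% hm, hev, ← hmt, Category.assoc]

lemma IsWeakExponential.exists_eq_comp (hP : IsProjectiveCover P) {X Y B W V : E}
    {p : V ⟶ W} {q : V ⟶ X} {v : V ⟶ Y} (hw : IsWeakExponential P W V p q v) {c : Y ⟶ B}
    {eW : W ⨯ X ⟶ B} (heW : prod.lift p q ≫ eW = v ≫ c) :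
    ∃ ev : W ⨯ X ⟶ Y, prod.lift p q ≫ ev = v ∧ eW = ev ≫ c := by
  obtain ⟨ev, hev⟩ := hw.cone.det.exists_lift_comp_eq hP hw.cone.wp
  have := hw.cone.wp.epi_lift hP
  exact ⟨ev, hev, (cancel_epi _).1 (by rw [heW, reassoc_of% hev])⟩

lemma WExpCone.of_regEpi (hP : IsProjectiveCover P) {S Z X Y : E} (hZ : Z ∈ P) (hS : S ∈ P)
    {s : S ⟶ Z ⨯ X} (hs : RegEpi s) (g : Z ⨯ X ⟶ Y) :
    WExpCone P Z S (s ≫ prod.fst) (s ≫ prod.snd) (s ≫ g) where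
  memW := hZ
  wp := .of_regEpi hP hS hs
  det _ _ h k h₁ h₂ := by
    have : h ≫ s = k ≫ s := by ext <;> simpa only [Category.assoc]
    rw [reassoc_of% this]

lemma IsWeakExponential.isQuasiExponential (hP : IsProjectiveCover P) {W V X Y : E}
    {p : V ⟶ W} {q : V ⟶ X} {v : V ⟶ Y} (hw : IsWeakExponential P W V p q v)
    {ev : W ⨯ X ⟶ Y} (hev : prod.lift p q ≫ ev = v) : IsQuasiExponential P X W ev := by
  intro Z hZ g
  obtain ⟨S, hS, s, hs⟩ := hP.2 (Z ⨯ X)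
  obtain ⟨α, β, hβp, hβq, hβv⟩ := hw.lift _ _ _ (WExpCone.of_regEpi hP hZ hS hs g)
  refine ⟨α, ?_⟩
  have := hs.epi
  have hsα : s ≫ prod.map α (𝟙 X) = β ≫ prod.lift p q := by
    ext <;> simp only [Category.assoc, prod.map_fst, prod.map_snd, prod.lift_fst, prod.lift_snd,
      Category.comp_id, hβp, hβq]
  rw [← cancel_epi s, reassoc_of% hsα, hev, hβv]

lemma IsQuasiExponential.comp_regEpi (hP : IsProjectiveCover P) {X W Y B : E}
    {ev : W ⨯ X ⟶ Y} (hq : IsQuasiExponential P X W ev) (hX : InternallyProjective X)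
    {c : Y ⟶ B} (hc : RegEpi c) : IsQuasiExponential P X W (ev ≫ c) := by
  intro Z hZ f
  obtain ⟨U, u, k, hu, hk⟩ := hX c hc f
  obtain ⟨σ, hσ⟩ := hP.1 Z hZ u hu (𝟙 Z)
  obtain ⟨α, hα⟩ := hq hZ (prod.map σ (𝟙 X) ≫ k)
  refine ⟨α, ?_⟩
  rw [reassoc_of% hα, hk, prod.map_map_assoc, hσ, Category.id_comp, prod.map_id_id,
    Category.id_comp]

lemma IsWeakExponential.isQuasiExponential_of_regEpi (hP : IsProjectiveCover P)
    {X Y B W V : E} (hX : InternallyProjective X) {p : V ⟶ W} {q : V ⟶ X} {v : V ⟶ Y}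
    (hw : IsWeakExponential P W V p q v) {c : Y ⟶ B} (hc : RegEpi c) {eW : W ⨯ X ⟶ B}
    (heW : prod.lift p q ≫ eW = v ≫ c) : IsQuasiExponential P X W eW := by
  obtain ⟨ev, hev, rfl⟩ := hw.exists_eq_comp hP heW
  exact (hw.isQuasiExponential hP hev).comp_regEpi hP hX hc

lemma internallyProjective_of_quasiExponential (hP : IsProjectiveCover P) {X : E}
    (h : ∀ B : E, ∃ Y ∈ P, ∃ (W : E) (ev : W ⨯ X ⟶ Y) (c : Y ⟶ B),
      IsQuasiExponential P X W (ev ≫ c)) :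
    InternallyProjective X := by
  intro T A B e he f
  obtain ⟨Y, hY, W, ev, c, hq⟩ := h B
  obtain ⟨Z, hZ, z, hz⟩ := hP.2 T
  obtain ⟨g, hg⟩ := hq hZ (prod.map z (𝟙 X) ≫ f)
  obtain ⟨ĉ, hĉ⟩ := hP.1 Y hY e he c
  exact ⟨Z, z, prod.map g (𝟙 X) ≫ ev ≫ ĉ, hz, by simp only [Category.assoc, hĉ, hg]⟩

lemma exists_weakExponential_of_cover (hP : IsProjectiveCover P) (hwe : HasWeakExponentials P)
    {X : E} (hX : X ∈ P) (B : E) :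
    ∃ Y ∈ P, ∃ c : Y ⟶ B, RegEpi c ∧ ∃ (W V : E) (p : V ⟶ W) (q : V ⟶ X) (v : V ⟶ Y),
      IsWeakExponential P W V p q v ∧ ∃ eW : W ⨯ X ⟶ B, prod.lift p q ≫ eW = v ≫ c := by
  obtain ⟨Y, hY, c, hc⟩ := hP.2 B
  obtain ⟨W, V, p, q, v, hw⟩ := hwe hX hY
  obtain ⟨ev, hev⟩ := hw.cone.det.exists_lift_comp_eq hP hw.cone.wp
  exact ⟨Y, hY, c, hc, W, V, p, q, v, hw, ev ≫ c, by rw [reassoc_of% hev]⟩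

end WeakExponentials

theorem stmt13_general {E : Type u} [Category.{v} E] [HasFiniteLimits E]
    (P : Set E) (hP : IsProjectiveCover P)
    (hwe : HasWeakExponentials P) (X : E) (hX : X ∈ P) :
    (InternallyProjective X ↔
       (∀ ⦃B Y : E⦄, Y ∈ P → ∀ (c : Y ⟶ B), RegEpi c →
        ∀ ⦃W V : E⦄ (p : V ⟶ W) (q : V ⟶ X) (v : V ⟶ Y),
          IsWeakExponential P W V p q v →
        ∀ (eW : W ⨯ X ⟶ B), prod.lift p q ≫ eW = v ≫ c →
          IsQuasiExponential P X W eW)) ∧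
    (InternallyProjective X ↔
       (∀ B : E, ∃ Y ∈ P, ∃ c : Y ⟶ B, RegEpi c ∧
        ∃ (W V : E) (p : V ⟶ W) (q : V ⟶ X) (v : V ⟶ Y),
          IsWeakExponential P W V p q v ∧
        ∃ eW : W ⨯ X ⟶ B, prod.lift p q ≫ eW = v ≫ c ∧
          IsQuasiExponential P X W eW)) := by
  refine ⟨⟨fun hip B Y hY c hc W V p q v hw eW heW => ?_, fun h2 => ?_⟩,
    ⟨fun hip B => ?_, fun h3 => ?_⟩⟩
  · exact hw.isQuasiExponential_of_regEpi hP hip hc heW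
  · refine internallyProjective_of_quasiExponential hP fun B => ?_
    obtain ⟨Y, hY, c, hc, W, V, p, q, v, hw, eW, heW⟩ :=
      exists_weakExponential_of_cover hP hwe hX B
    obtain ⟨ev, -, rfl⟩ := hw.exists_eq_comp hP heW
    exact ⟨Y, hY, W, ev, c, h2 hY c hc p q v hw _ heW⟩
  · obtain ⟨Y, hY, c, hc, W, V, p, q, v, hw, eW, heW⟩ :=
      exists_weakExponential_of_cover hP hwe hX B
    exact ⟨Y, hY, c, hc, W, V, p, q, v, hw, eW, heW,
      hw.isQuasiExponential_of_regEpi hP hip hc heW⟩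
  · refine internallyProjective_of_quasiExponential hP fun B => ?_
    obtain ⟨Y, hY, c, -, W, V, p, q, v, hw, eW, heW, hq⟩ := h3 B
    obtain ⟨ev, -, rfl⟩ := hw.exists_eq_comp hP heW
    exact ⟨Y, hY, W, ev, c, hq⟩

/-- For `X ∈ P`, with `P` having weak exponentials, the following are
equivalent: (1) `X` is internally projective; (2) for every `B` and every `P`-cover
`Y ↠ B`, every weak exponential of `X` and `Y` is a quasi exponential of `X` and `B`
via the induced arrow; (3) for every `B` there are a `P`-cover `Y ↠ B` and a weak
exponential of `X` and `Y` which is a quasi exponential of `X` and `B`. -/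
theorem stmt13 {E : Type u} [Category.{v} E] [HasFiniteLimits E]
    (hE : IsExact E) (P : Set E) (hP : IsProjectiveCover P)
    (hwe : HasWeakExponentials P) (X : E) (hX : X ∈ P) :
    (InternallyProjective X ↔
       (∀ ⦃B Y : E⦄, Y ∈ P → ∀ (c : Y ⟶ B), RegEpi c →
        ∀ ⦃W V : E⦄ (p : V ⟶ W) (q : V ⟶ X) (v : V ⟶ Y),
          IsWeakExponential P W V p q v →
        ∀ (eW : W ⨯ X ⟶ B), prod.lift p q ≫ eW = v ≫ c →
          IsQuasiExponential P X W eW)) ∧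
    (InternallyProjective X ↔
       (∀ B : E, ∃ Y ∈ P, ∃ c : Y ⟶ B, RegEpi c ∧
        ∃ (W V : E) (p : V ⟶ W) (q : V ⟶ X) (v : V ⟶ Y),
          IsWeakExponential P W V p q v ∧
        ∃ eW : W ⨯ X ⟶ B, prod.lift p q ≫ eW = v ≫ c ∧
          IsQuasiExponential P X W eW)) :=
  stmt13_general P hP hwe X hX

end ExComp
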